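/- Let X be an a-normal space, let α ≤ β be real numbers, and let (D,(r◁,r▷)_{r ∈ D}) be an [α,β]-draft on X. Let a < b be such that [a,b] ∩ D = {a,b} and let λ ∈ (a,b). Then there exist closed subsets λ◁ and λ▷ of X such that the family (D ∪ {λ}, (r◁,r▷)_{r ∈ D ∪ {λ}}) obtained by adjoining λ◁ and λ▷ is an [α,β]-draft on X refining the given one (i.e., it agrees with the given draft on all r ∈ D). -/
import Mathlib


open Classical in
/-- The denominator of a real number: the reduced denominator if rational, `0` if irrational. -/
noncomputable def den (r : ℝ) : ℕ :=
  if h : ∃ q : ℚ, (q : ℝ) = r then h.choose.den else 0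

/-- `AC ζ Λ`: the points of the a-space `(X, ζ)` that may be sent into `Λ ⊆ ℝ` by a
denominator-decreasing map. -/
def AC {X : Type*} (ζ : X → ℕ) (Λ : Set ℝ) : Set X := {x | ∃ l ∈ Λ, den l ∣ ζ x}

/-- An a-normal space structure on a topological space `X` with denominator function `ζ`. -/
def ANormal {X : Type*} [TopologicalSpace X] (ζ : X → ℕ) : Prop :=
  CompactSpace X ∧ T2Space X ∧
  (∀ n : ℕ, IsClosed {x : X | ζ x ∣ n}) ∧
  ∀ x y : X, x ≠ y → ∃ U V : Set X, IsOpen U ∧ IsOpen V ∧ x ∈ U ∧ y ∈ V ∧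
    Disjoint U V ∧ ∀ z ∈ (U ∪ V)ᶜ, ζ z = 0

/-- An `[α,β]`-draft on an a-space `(X, ζ)`. -/
def IsDraft {X : Type*} [TopologicalSpace X] (ζ : X → ℕ) (α β : ℝ)
    (D : Set ℝ) (down up : ℝ → Set X) : Prop :=
  D ⊆ Set.Icc α β ∧ α ∈ D ∧ β ∈ D ∧
  (∀ r ∈ D, IsClosed (down r)) ∧ (∀ r ∈ D, IsClosed (up r)) ∧
  up α = Set.univ ∧ down β = Set.univ ∧
  (∀ r ∈ D, down r ∪ up r = Set.univ) ∧
  (∀ r ∈ D, ∀ s ∈ D, r < s → down r ∩ up s = ∅) ∧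
  (∀ r ∈ D, ∀ s ∈ D, r ≤ s → up r ∩ down s ⊆ AC ζ (Set.Icc r s))

/- ### Auxiliary lemmas -/

lemma den_ratCast (q : ℚ) : den (q : ℝ) = q.den := by
  have h : ∃ q' : ℚ, (q' : ℝ) = (q : ℝ) := ⟨q, rfl⟩
  rw [den, dif_pos h]
  exact congrArg Rat.den (Rat.cast_injective h.choose_spec)

lemma den_intCast_div_dvd (k : ℤ) (m : ℕ) : den ((k : ℝ) / (m : ℝ)) ∣ m := by
  have hq : ((Rat.divInt k (m : ℤ) : ℚ) : ℝ) = (k : ℝ) / (m : ℝ) := by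
    rw [Rat.divInt_eq_div]; push_cast; ring
  rw [← hq, den_ratCast]
  exact_mod_cast Rat.den_dvd k (m : ℤ)

lemma AC_mono {X : Type*} (ζ : X → ℕ) {Λ Λ' : Set ℝ} (h : Λ ⊆ Λ') :
    AC ζ Λ ⊆ AC ζ Λ' := fun x ⟨μ, hμ, hd⟩ => ⟨μ, h hμ, hd⟩

/-- A rational of denominator dividing `m` exists in any interval of length `≥ 1/m`. -/
lemma exists_witness {u v : ℝ} (m : ℕ) (hm : m ≠ 0) (h : 1 ≤ (m : ℝ) * (v - u)) :
    ∃ μ ∈ Set.Icc u v, den μ ∣ m := by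
  have hm0 : (0 : ℝ) < m := by exact_mod_cast Nat.pos_of_ne_zero hm
  refine ⟨(⌈u * m⌉ : ℝ) / m, ⟨?_, ?_⟩, den_intCast_div_dvd _ _⟩
  · rw [le_div_iff₀ hm0]
    exact Int.le_ceil _
  · rw [div_le_iff₀ hm0]
    have h1 : (⌈u * (m : ℝ)⌉ : ℝ) < u * m + 1 := Int.ceil_lt_add_one _
    nlinarith
  

/-- Points of a closed set `K` with no admissible fraction in `[u,v]` form a closed set. -/
lemma isClosed_sdiff_AC {X : Type*} [TopologicalSpace X] {ζ : X → ℕ}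
    (hN2 : ∀ n : ℕ, IsClosed {x : X | ζ x ∣ n}) {K : Set X} (hK : IsClosed K)
    {u v : ℝ} (huv : u < v) : IsClosed (K \ AC ζ (Set.Icc u v)) := by
  classical
  have hvu : (0 : ℝ) < v - u := sub_pos.mpr huv
  set c : ℕ := Nat.ceil (1 / (v - u)) + 1 with hc
  have key : K \ AC ζ (Set.Icc u v) =
      ⋃ m ∈ Finset.filter (fun m => ¬ ∃ μ ∈ Set.Icc u v, den μ ∣ m) (Finset.range c),
        (K ∩ {x | ζ x ∣ m}) := by
    ext x
    simp only [Set.mem_iUnion, Finset.mem_filter, Finset.mem_range, Set.mem_diff,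
      Set.mem_inter_iff, Set.mem_setOf_eq]
    constructor
    · rintro ⟨hxK, hxAC⟩
      have hxAC' : ¬ ∃ μ ∈ Set.Icc u v, den μ ∣ ζ x := fun ⟨μ, hμ, hd⟩ => hxAC ⟨μ, hμ, hd⟩
      refine ⟨ζ x, ⟨?_, hxAC'⟩, hxK, dvd_refl _⟩
      by_contra hge
      push_neg at hge
      have hζ0 : ζ x ≠ 0 := by
        intro h0
        exact hxAC' ⟨u, ⟨le_refl u, huv.le⟩, by rw [h0]; exact dvd_zero _⟩
      have hle : (c : ℝ) ≤ (ζ x : ℝ) := by exact_mod_cast hge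
      have h2 : 1 / (v - u) ≤ (Nat.ceil (1 / (v - u)) : ℝ) := Nat.le_ceil _
      have hc' : (c : ℝ) = (Nat.ceil (1 / (v - u)) : ℝ) + 1 := by rw [hc]; push_cast; ring
      have h3 : 1 / (v - u) * (v - u) = 1 := one_div_mul_cancel hvu.ne'
      have h1 : 1 ≤ (ζ x : ℝ) * (v - u) := by nlinarith
      obtain ⟨μ, hμ, hd⟩ := exists_witness (ζ x) hζ0 h1
      exact hxAC' ⟨μ, hμ, hd⟩
    · rintro ⟨m, ⟨_, hmP⟩, hxK, hdvd⟩
      exact ⟨hxK, fun ⟨μ, hμ, hd⟩ => hmP ⟨μ, hμ, hd.trans hdvd⟩⟩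
  rw [key]
  exact Set.Finite.isClosed_biUnion (Finset.finite_toSet _)
    (fun m _ => hK.inter (hN2 m))

/-- Separation of a closed set from a point, with `ζ = 0` off the separating sets. -/
lemma anormal_sep_point {X : Type*} [TopologicalSpace X] {ζ : X → ℕ} [CompactSpace X]
    (hN3 : ∀ x y : X, x ≠ y → ∃ U V : Set X, IsOpen U ∧ IsOpen V ∧ x ∈ U ∧ y ∈ V ∧
      Disjoint U V ∧ ∀ z ∈ (U ∪ V)ᶜ, ζ z = 0)
    {C : Set X} (hC : IsClosed C) {y : X} (hy : y ∉ C) :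
    ∃ U V : Set X, IsOpen U ∧ IsOpen V ∧ C ⊆ U ∧ y ∈ V ∧ Disjoint U V ∧
      ∀ z ∈ (U ∪ V)ᶜ, ζ z = 0 := by
  classical
  have hch : ∀ x : C, ∃ U V : Set X, IsOpen U ∧ IsOpen V ∧ (x : X) ∈ U ∧ y ∈ V ∧
      Disjoint U V ∧ ∀ z ∈ (U ∪ V)ᶜ, ζ z = 0 :=
    fun x => hN3 x y (fun h => hy (h ▸ x.2))
  choose U V hUo hVo hxU hyV hdis hout using hch
  have hcov : C ⊆ ⋃ x : C, U x := fun z hz => Set.mem_iUnion.mpr ⟨⟨z, hz⟩, hxU _⟩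
  obtain ⟨t, ht⟩ := hC.isCompact.elim_finite_subcover U hUo hcov
  refine ⟨⋃ x ∈ t, U x, ⋂ x ∈ t, V x, isOpen_biUnion (fun x _ => hUo x),
    isOpen_biInter_finset (fun x _ => hVo x), ht,
    Set.mem_iInter₂.mpr (fun x _ => hyV x), ?_, ?_⟩
  · rw [Set.disjoint_left]
    intro z hz hz'
    obtain ⟨x, hxt, hzU⟩ := Set.mem_iUnion₂.mp hz
    exact (hdis x).le_bot ⟨hzU, Set.mem_iInter₂.mp hz' x hxt⟩
  · intro z hz
    rw [Set.mem_compl_iff, Set.mem_union] at hz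
    push_neg at hz
    obtain ⟨hz1, hz2⟩ := hz
    have hex : ∃ x ∈ t, z ∉ V x := by
      by_contra hcon
      push_neg at hcon
      exact hz2 (Set.mem_iInter₂.mpr hcon)
    obtain ⟨x, hxt, hzV⟩ := hex
    refine hout x z ?_
    rw [Set.mem_compl_iff, Set.mem_union]
    push_neg
    exact ⟨fun hU => hz1 (Set.mem_iUnion₂.mpr ⟨x, hxt, hU⟩), hzV⟩

/-- Separation of disjoint closed sets in an a-normal space, with `ζ = 0` outside. -/
lemma anormal_sep {X : Type*} [TopologicalSpace X] {ζ : X → ℕ} (hX : ANormal ζ)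
    {C E : Set X} (hC : IsClosed C) (hE : IsClosed E) (hCE : Disjoint C E) :
    ∃ U V : Set X, IsOpen U ∧ IsOpen V ∧ C ⊆ U ∧ E ⊆ V ∧ U ∩ V = ∅ ∧
      ∀ z ∈ (U ∪ V)ᶜ, ζ z = 0 := by
  classical
  obtain ⟨hcomp, _, _, hN3⟩ := hX
  haveI := hcomp
  have hch : ∀ y : E, ∃ U V : Set X, IsOpen U ∧ IsOpen V ∧ C ⊆ U ∧ (y : X) ∈ V ∧
      Disjoint U V ∧ ∀ z ∈ (U ∪ V)ᶜ, ζ z = 0 :=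
    fun y => anormal_sep_point hN3 hC (Set.disjoint_right.mp hCE y.2)
  choose U V hUo hVo hCU hyV hdis hout using hch
  have hcov : E ⊆ ⋃ y : E, V y := fun z hz => Set.mem_iUnion.mpr ⟨⟨z, hz⟩, hyV _⟩
  obtain ⟨t, ht⟩ := hE.isCompact.elim_finite_subcover V hVo hcov
  refine ⟨⋂ y ∈ t, U y, ⋃ y ∈ t, V y, isOpen_biInter_finset (fun y _ => hUo y),
    isOpen_biUnion (fun y _ => hVo y), Set.subset_iInter₂ (fun y _ => hCU y), ht, ?_, ?_⟩
  · rw [Set.eq_empty_iff_forall_notMem]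
    rintro z ⟨hz, hz'⟩
    obtain ⟨y, hyt, hzV⟩ := Set.mem_iUnion₂.mp hz'
    exact (hdis y).le_bot ⟨Set.mem_iInter₂.mp hz y hyt, hzV⟩
  · intro z hz
    rw [Set.mem_compl_iff, Set.mem_union] at hz
    push_neg at hz
    obtain ⟨hz1, hz2⟩ := hz
    have hex : ∃ y ∈ t, z ∉ U y := by
      by_contra hcon
      push_neg at hcon
      exact hz1 (Set.mem_iInter₂.mpr hcon)
    obtain ⟨y, hyt, hzU⟩ := hex
    refine hout y z ?_
    rw [Set.mem_compl_iff, Set.mem_union]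
    push_neg
    exact ⟨hzU, fun hV => hz2 (Set.mem_iUnion₂.mpr ⟨y, hyt, hV⟩)⟩

/-- Refinement of a draft by one point: if `a < b`, `[a,b] ∩ D = {a,b}`
and `λ ∈ (a,b)`, then the draft can be refined to a draft on `D ∪ {λ}` agreeing with the
given one on `D`. -/
theorem draft_refinement_by_one
    {X : Type*} [TopologicalSpace X] (ζ : X → ℕ) (hX : ANormal ζ)
    (α β : ℝ) (hαβ : α ≤ β) (D : Set ℝ) (down up : ℝ → Set X)
    (h : IsDraft ζ α β D down up)
    (a b : ℝ) (hab : a < b) (hD : Set.Icc a b ∩ D = {a, b})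
    (l : ℝ) (hl : l ∈ Set.Ioo a b) :
    ∃ down' up' : ℝ → Set X,
      (∀ r ∈ D, down' r = down r ∧ up' r = up r) ∧
      IsDraft ζ α β (insert l D) down' up' := by
  classical
  obtain ⟨hsub, hαD, hβD, hdc, huc, huα, hdβ, hD2, hD3, hD4⟩ := h
  obtain ⟨hal, hlb⟩ := hl
  have hN2 : ∀ n : ℕ, IsClosed {x : X | ζ x ∣ n} := hX.2.2.1
  -- a, b belong to D, l does not
  have haD : a ∈ D := by
    have h1 : a ∈ ({a, b} : Set ℝ) := Set.mem_insert _ _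
    rw [← hD] at h1; exact h1.2
  have hbD : b ∈ D := by
    have h1 : b ∈ ({a, b} : Set ℝ) := Set.mem_insert_iff.mpr (Or.inr rfl)
    rw [← hD] at h1; exact h1.2
  have hlD : l ∉ D := by
    intro hmem
    have h1 : l ∈ Set.Icc a b ∩ D := ⟨⟨hal.le, hlb.le⟩, hmem⟩
    rw [hD] at h1
    rcases h1 with h1 | h1
    · exact absurd h1 hal.ne'
    · exact absurd h1 hlb.ne
  have hne : ∀ r : ℝ, r ∈ D → r ≠ l := by
    intro r hr hc
    subst hc
    exact hlD hr
  have hra : ∀ r ∈ D, r < l → r ≤ a := by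
    intro r hr hrl
    by_contra hc; push_neg at hc
    have h1 : r ∈ Set.Icc a b ∩ D := ⟨⟨hc.le, (hrl.trans hlb).le⟩, hr⟩
    rw [hD] at h1
    rcases h1 with rfl | rfl
    · exact lt_irrefl _ hc
    · exact absurd hrl (not_lt.mpr hlb.le)
  have hsb : ∀ s ∈ D, l < s → b ≤ s := by
    intro s hs hls
    by_contra hc; push_neg at hc
    have h1 : s ∈ Set.Icc a b ∩ D := ⟨⟨(hal.trans hls).le, hc.le⟩, hs⟩
    rw [hD] at h1
    rcases h1 with rfl | rfl
    · exact absurd hls (not_lt.mpr hal.le)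
    · exact lt_irrefl _ hc
  -- the core sets
  set K : Set X := up a ∩ down b with hKdef
  have hKc : IsClosed K := (huc a haD).inter (hdc b hbD)
  have hMUc : IsClosed (K \ AC ζ (Set.Icc a l)) := isClosed_sdiff_AC hN2 hKc hal
  have hMVc : IsClosed (K \ AC ζ (Set.Icc l b)) := isClosed_sdiff_AC hN2 hKc hlb
  set S : Set X := up b ∪ (K \ AC ζ (Set.Icc a l)) with hSdef
  set T : Set X := down a ∪ (K \ AC ζ (Set.Icc l b)) with hTdef
  have hSc : IsClosed S := (huc b hbD).union hMUc
  have hTc : IsClosed T := (hdc a haD).union hMVc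
  have hab' : down a ∩ up b = ∅ := hD3 a haD b hbD hab
  have hdisj : Disjoint S T := by
    rw [Set.disjoint_left]
    rintro x (hx | hx) hy
    · rcases hy with hy | hy
      · have : x ∈ down a ∩ up b := ⟨hy, hx⟩
        rw [hab'] at this
        exact this
      · -- x ∈ up b, x ∈ K \ AC[l,b]
        have hxK : x ∈ K := hy.1
        obtain ⟨μ, hμ, hd⟩ := hD4 b hbD b hbD le_rfl ⟨hx, hxK.2⟩
        have hμb : μ = b := le_antisymm hμ.2 hμ.1
        exact hy.2 ⟨b, ⟨hlb.le, le_rfl⟩, hμb ▸ hd⟩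
    · rcases hy with hy | hy
      · have hxK : x ∈ K := hx.1
        obtain ⟨μ, hμ, hd⟩ := hD4 a haD a haD le_rfl ⟨hxK.1, hy⟩
        have hμa : μ = a := le_antisymm hμ.2 hμ.1
        exact hx.2 ⟨a, ⟨le_rfl, hal.le⟩, hμa ▸ hd⟩
      · have hxK : x ∈ K := hx.1
        obtain ⟨μ, hμ, hd⟩ := hD4 a haD b hbD hab.le hxK
        rcases le_total μ l with hc | hc
        · exact hx.2 ⟨μ, ⟨hμ.1, hc⟩, hd⟩
        · exact hy.2 ⟨μ, ⟨hc, hμ.2⟩, hd⟩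
  obtain ⟨U, V, hUo, hVo, hSU, hTV, hUV, hout⟩ := anormal_sep hX hSc hTc hdisj
  -- key inclusions
  have hupb_sub : ∀ s ∈ D, l < s → up s ⊆ U := by
    intro s hs hls x hx
    rcases eq_or_lt_of_le (hsb s hs hls) with rfl | hbs
    · exact hSU (Or.inl hx)
    · have hmem : x ∈ down b ∪ up b := by rw [hD2 b hbD]; trivial
      rcases hmem with hmem | hmem
      · have : x ∈ down b ∩ up s := ⟨hmem, hx⟩
        rw [hD3 b hbD s hs hbs] at this
        exact absurd this (Set.notMem_empty x)
      · exact hSU (Or.inl hmem)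
  have hdowna_sub : ∀ r ∈ D, r < l → down r ⊆ V := by
    intro r hr hrl x hx
    rcases eq_or_lt_of_le (hra r hr hrl) with rfl | har
    · exact hTV (Or.inl hx)
    · have hmem : x ∈ down a ∪ up a := by rw [hD2 a haD]; trivial
      rcases hmem with hmem | hmem
      · exact hTV (Or.inl hmem)
      · have : x ∈ down r ∩ up a := ⟨hx, hmem⟩
        rw [hD3 r hr a haD har] at this
        exact absurd this (Set.notMem_empty x)
  have hcoreU : up a ∩ Uᶜ ⊆ AC ζ (Set.Icc a l) := by
    rintro x ⟨hxa, hxU⟩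
    have hnS : x ∉ S := fun hc => hxU (hSU hc)
    have hxb : x ∈ down b := by
      have hmem : x ∈ down b ∪ up b := by rw [hD2 b hbD]; trivial
      rcases hmem with hmem | hmem
      · exact hmem
      · exact absurd (Or.inl hmem) hnS
    by_contra hAC
    exact hnS (Or.inr ⟨⟨hxa, hxb⟩, hAC⟩)
  have hcoreV : down b ∩ Vᶜ ⊆ AC ζ (Set.Icc l b) := by
    rintro x ⟨hxb, hxV⟩
    have hnT : x ∉ T := fun hc => hxV (hTV hc)
    have hxa : x ∈ up a := by
      have hmem : x ∈ down a ∪ up a := by rw [hD2 a haD]; trivial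
      rcases hmem with hmem | hmem
      · exact absurd (Or.inl hmem) hnT
      · exact hmem
    by_contra hAC
    exact hnT (Or.inr ⟨⟨hxa, hxb⟩, hAC⟩)
  -- the refined draft
  refine ⟨Function.update down l Uᶜ, Function.update up l Vᶜ, ?_, ?_⟩
  · intro r hr
    exact ⟨Function.update_of_ne (hne r hr) _ _, Function.update_of_ne (hne r hr) _ _⟩
  refine ⟨?_, ?_, ?_, ?_, ?_, ?_, ?_, ?_, ?_, ?_⟩
  · -- insert l D ⊆ Icc α β
    intro r hr
    rcases Set.mem_insert_iff.mp hr with rfl | hrD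
    · exact ⟨le_trans (hsub haD).1 hal.le, le_trans hlb.le (hsub hbD).2⟩
    · exact hsub hrD
  · exact Set.mem_insert_iff.mpr (Or.inr hαD)
  · exact Set.mem_insert_iff.mpr (Or.inr hβD)
  · -- down' closed
    intro r hr
    rcases Set.mem_insert_iff.mp hr with rfl | hrD
    · rw [Function.update_self]
      exact hUo.isClosed_compl
    · rw [Function.update_of_ne (hne r hrD) _ _]
      exact hdc r hrD
  · -- up' closed
    intro r hr
    rcases Set.mem_insert_iff.mp hr with rfl | hrD
    · rw [Function.update_self]
      exact hVo.isClosed_compl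
    · rw [Function.update_of_ne (hne r hrD) _ _]
      exact huc r hrD
  · -- up' α = univ
    have hαl : α ≠ l := ne_of_lt (lt_of_le_of_lt (hsub haD).1 hal)
    rw [Function.update_of_ne hαl _ _]
    exact huα
  · -- down' β = univ
    have hβl : β ≠ l := ne_of_gt (lt_of_lt_of_le hlb (hsub hbD).2)
    rw [Function.update_of_ne hβl _ _]
    exact hdβ
  · -- D2
    intro r hr
    rcases Set.mem_insert_iff.mp hr with rfl | hrD
    · rw [Function.update_self, Function.update_self, ← Set.compl_inter, hUV,
        Set.compl_empty]
    · rw [Function.update_of_ne (hne r hrD) _ _,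
        Function.update_of_ne (hne r hrD) _ _]
      exact hD2 r hrD
  · -- D3
    intro r hr s hs hrs
    rcases Set.mem_insert_iff.mp hr with rfl | hrD
    · rcases Set.mem_insert_iff.mp hs with rfl | hsD
      · exact absurd hrs (lt_irrefl _)
      · rw [Function.update_self, Function.update_of_ne (hne s hsD) _ _]
        rw [Set.eq_empty_iff_forall_notMem]
        rintro x ⟨hx1, hx2⟩
        exact hx1 (hupb_sub s hsD hrs hx2)
    · rcases Set.mem_insert_iff.mp hs with rfl | hsD
      · rw [Function.update_self, Function.update_of_ne (hne r hrD) _ _]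
        rw [Set.eq_empty_iff_forall_notMem]
        rintro x ⟨hx1, hx2⟩
        exact hx2 (hdowna_sub r hrD hrs hx1)
      · rw [Function.update_of_ne (hne r hrD) _ _,
          Function.update_of_ne (hne s hsD) _ _]
        exact hD3 r hrD s hsD hrs
  · -- D4
    intro r hr s hs hrs
    rcases Set.mem_insert_iff.mp hr with rfl | hrD
    · rcases Set.mem_insert_iff.mp hs with rfl | hsD
      · -- (l, l)
        rw [Function.update_self, Function.update_self]
        rintro x ⟨hx1, hx2⟩
        have hz : ζ x = 0 := by
          refine hout x ?_
          rw [Set.mem_compl_iff, Set.mem_union]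
          push_neg
          exact ⟨hx2, hx1⟩
        exact ⟨_, Set.mem_Icc.mpr ⟨le_rfl, le_rfl⟩, by rw [hz]; exact dvd_zero _⟩
      · -- (l, s), s ∈ D
        have hls : r < s := lt_of_le_of_ne hrs (Ne.symm (hne s hsD))
        rw [Function.update_self, Function.update_of_ne (hne s hsD) _ _]
        rcases eq_or_lt_of_le (hsb s hsD hls) with rfl | hbs
        · rintro x ⟨hx1, hx2⟩
          exact hcoreV ⟨hx2, hx1⟩
        · rintro x ⟨hx1, hx2⟩
          have hmem : x ∈ down b ∪ up b := by rw [hD2 b hbD]; trivial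
          rcases hmem with hmem | hmem
          · exact AC_mono ζ (Set.Icc_subset_Icc le_rfl hbs.le) (hcoreV ⟨hmem, hx1⟩)
          · exact AC_mono ζ (Set.Icc_subset_Icc hlb.le le_rfl)
              (hD4 b hbD s hsD hbs.le ⟨hmem, hx2⟩)
    · rcases Set.mem_insert_iff.mp hs with rfl | hsD
      · -- (r, l), r ∈ D
        have hrl : r < s := lt_of_le_of_ne hrs (hne r hrD)
        rw [Function.update_self, Function.update_of_ne (hne r hrD) _ _]
        rcases eq_or_lt_of_le (hra r hrD hrl) with rfl | har
        · exact hcoreU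
        · rintro x ⟨hx1, hx2⟩
          have hmem : x ∈ down a ∪ up a := by rw [hD2 a haD]; trivial
          rcases hmem with hmem | hmem
          · exact AC_mono ζ (Set.Icc_subset_Icc le_rfl hal.le)
              (hD4 r hrD a haD har.le ⟨hx1, hmem⟩)
          · exact AC_mono ζ (Set.Icc_subset_Icc har.le le_rfl) (hcoreU ⟨hmem, hx2⟩)
      · rw [Function.update_of_ne (hne r hrD) _ _,
          Function.update_of_ne (hne s hsD) _ _]
        exact hD4 r hrD s hsD hrs
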